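/- If G is a regular Γ-AG-groupoid, then AΓG = A for every right Γ-ideal A, and GΓB = B for every left Γ-ideal B. -/

import Mathlib

def gprod {G Γ : Type*} (mul : G → Γ → G → G) (A B : Set G) : Set G :=
  {c | ∃ a ∈ A, ∃ b ∈ B, ∃ γ : Γ, c = mul a γ b}

section gprod

variable {G Γ : Type*} (mul : G → Γ → G → G)

theorem mul_mem_gprod {A B : Set G} {a b : G} (ha : a ∈ A) (hb : b ∈ B) (γ : Γ) :
    mul a γ b ∈ gprod mul A B :=
  ⟨a, ha, b, hb, γ, rfl⟩

theorem subset_gprod_univ_left {B : Set G}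
    (reg : ∀ b ∈ B, ∃ (x : G) (β γ : Γ), b = mul (mul b β x) γ b) :
    B ⊆ gprod mul Set.univ B := by
  intro b hb
  obtain ⟨x, β, γ, hx⟩ := reg b hb
  exact hx ▸ mul_mem_gprod mul (Set.mem_univ _) hb γ

theorem subset_gprod_univ_right {A : Set G} (hA : gprod mul A Set.univ ⊆ A)
    (reg : ∀ a ∈ A, ∃ (x : G) (β γ : Γ), a = mul (mul a β x) γ a) :
    A ⊆ gprod mul A Set.univ := by
  intro a ha
  obtain ⟨x, β, γ, hx⟩ := reg a ha
  have hax : mul a β x ∈ A := hA (mul_mem_gprod mul ha (Set.mem_univ x) β)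
  exact hx ▸ mul_mem_gprod mul hax (Set.mem_univ a) γ

end gprod

theorem stmt_12_general {G Γ : Type*} (mul : G → Γ → G → G)
    (reg : ∀ a : G, ∃ (x : G) (β γ : Γ), a = mul (mul a β x) γ a) :
    (∀ A : Set G, gprod mul A Set.univ ⊆ A → gprod mul A Set.univ = A) ∧
    (∀ B : Set G, gprod mul Set.univ B ⊆ B → gprod mul Set.univ B = B) :=
  ⟨fun _ hA => hA.antisymm (subset_gprod_univ_right mul hA fun a _ => reg a),
    fun _ hB => hB.antisymm (subset_gprod_univ_left mul fun b _ => reg b)⟩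

theorem stmt_12 {G Γ : Type*} (mul : G → Γ → G → G)
    (inv : ∀ (a b c : G) (γ δ : Γ), mul (mul a γ b) δ c = mul (mul c γ b) δ a)
    (reg : ∀ a : G, ∃ (x : G) (β γ : Γ), a = mul (mul a β x) γ a) :
    (∀ A : Set G, gprod mul A Set.univ ⊆ A → gprod mul A Set.univ = A) ∧
    (∀ B : Set G, gprod mul Set.univ B ⊆ B → gprod mul Set.univ B = B) :=
  stmt_12_general mul reg
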